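/- arXiv:2105.06302 — 6 statements merged into one kernel-verified Lean document; each statement's English description precedes it below -/
import Mathlib

section
/- Two nodes (r,c) and (s,d) of ℤ² lie in the same (ez,yz)-ladder if and only if they have the same depth yr + (e−y)c = ys + (e−y)d and the same residue c − r ≡ d − s (mod e), where y ∈ [1,e−1] is rational with denominator z. -/
def Ladder (e y : ℤ) (r c : ℤ) : Set (ℤ × ℤ) :=
  {x | ∃ k : ℤ, x = (r + k * (y - e), c + k * y)}

/-- Two nodes lie in the same `(ez, yz)`-ladder iff they have the same depth
`yr + (e-y)c` and the same residue `c - r` mod `e`.  Here `y ∈ [1, e-1]` is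
rational with denominator `z`, so `yz = y.num` and `ez = e * z`. -/
theorem same_ladder_iff_depth_and_residue (e : ℕ) (he : 2 ≤ e) (y : ℚ)
    (hy1 : 1 ≤ y) (hy2 : y ≤ (e : ℚ) - 1) (r c s d : ℤ) :
    (s, d) ∈ Ladder ((e : ℤ) * (y.den : ℤ)) y.num r c ↔
      (y * r + ((e : ℚ) - y) * c = y * s + ((e : ℚ) - y) * d ∧
        (c - r) % (e : ℤ) = (d - s) % (e : ℤ)) := by
  set a : ℤ := y.num with ha
  set z : ℤ := (y.den : ℤ) with hz
  have hz0 : 0 < z := by rw [hz]; exact_mod_cast y.pos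
  have ha0 : 0 < a := Rat.num_pos.mpr (lt_of_lt_of_le one_pos hy1)
  have he0 : (0:ℤ) < (e:ℤ) := by exact_mod_cast lt_of_lt_of_le two_pos he
  have hya : (a : ℚ) = y * z := by
    rw [ha, hz]
    push_cast
    rw [mul_comm]
    exact (Rat.den_mul_eq_num y).symm
  constructor
  · rintro ⟨k, hk⟩
    have hs : s = r + k * (a - (e:ℤ) * z) := congrArg Prod.fst hk
    have hd : d = c + k * a := congrArg Prod.snd hk
    subst hs hd
    constructor
    · push_cast
      linear_combination (-(k : ℚ) * e) * hya
    · have hds : c + k * a - (r + k * (a - (e:ℤ) * z)) = (c - r) + (e:ℤ) * (k * z) := by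
        ring
      rw [hds, Int.add_mul_emod_self_left]
  · rintro ⟨hdepth, hres⟩
    have hint : a * (r - s) = ((e:ℤ) * z - a) * (d - c) := by
      have : (a:ℚ) * ((r:ℚ) - s) = ((e:ℚ) * z - a) * ((d:ℚ) - c) := by
        linear_combination ((r:ℚ) - s + ((d:ℚ) - c)) * hya + (z:ℚ) * hdepth
      exact_mod_cast this
    have hresd : (e:ℤ) ∣ (d - c) + (r - s) := by
      have h2 : (e:ℤ) ∣ (d - s) - (c - r) := Int.ModEq.dvd hres
      have : (d - s) - (c - r) = (d - c) + (r - s) := by ring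
      rwa [this] at h2
    obtain ⟨w, hw⟩ := hresd
    have hzdc : a * ((e:ℤ) * w) = (e:ℤ) * (z * (d - c)) := by
      linear_combination hint - a * hw
    have hadv : a ∣ z * (d - c) := by
      refine ⟨w, ?_⟩
      have := mul_left_cancel₀ he0.ne' (by linear_combination -hzdc : (e:ℤ) * (z * (d-c)) = (e:ℤ) * (a * w))
      linarith [this]
    have hcop : IsCoprime a z := by
      rw [Int.isCoprime_iff_gcd_eq_one]
      exact y.reduced
    have hadc : a ∣ d - c := (IsCoprime.dvd_of_dvd_mul_left hcop) hadv
    obtain ⟨k, hk⟩ := hadc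
    refine ⟨k, ?_⟩
    have hd : d = c + k * a := by linarith [hk]
    have hrs : a * (r - s) = a * (k * ((e:ℤ) * z - a)) := by
      rw [hint, hk]; ring
    have hrs2 : r - s = k * ((e:ℤ) * z - a) := mul_left_cancel₀ ha0.ne' hrs
    have hs : s = r + k * (a - (e:ℤ) * z) := by linarith [hrs2]
    rw [Prod.ext_iff]
    exact ⟨hs, hd⟩
end

section
/- Two partitions λ, μ are (e,y)-equivalent if and only if their conjugates λ', μ' are (e, e−y)-equivalent. -/
def IsPartition (p : ℕ → ℕ) : Prop :=
  p 0 = 0 ∧ (∀ r, 1 ≤ r → p (r + 1) ≤ p r) ∧ (∃ N, ∀ r, N ≤ r → p r = 0)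

noncomputable def conj (p : ℕ → ℕ) : ℕ → ℕ :=
  fun r => Set.ncard {c : ℕ | 1 ≤ c ∧ r ≤ p c}

/-- The Young diagram of `p`, as a subset of `ℤ²`. -/
def cells (p : ℕ → ℕ) : Set (ℤ × ℤ) :=
  {x | 1 ≤ x.1 ∧ 1 ≤ x.2 ∧ x.2 ≤ (p x.1.toNat : ℤ)}

/-- Two partitions are `(e,y)`-equivalent if they have the same number of nodes
in every `(e,y)`-ladder. -/
noncomputable def LadderEquiv (e y : ℤ) (p q : ℕ → ℕ) : Prop :=
  ∀ r c : ℤ, (Ladder e y r c ∩ cells p).ncard = (Ladder e y r c ∩ cells q).ncard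

lemma partition_antitone {p : ℕ → ℕ} (hp : IsPartition p) {a b : ℕ}
    (ha : 1 ≤ a) (hab : a ≤ b) : p b ≤ p a := by
  have h : Antitone (fun n => p (n + 1)) :=
    antitone_nat_of_succ_le fun n => hp.2.1 (n + 1) (Nat.le_add_left 1 n)
  have := h (Nat.sub_le_sub_right hab 1)
  simpa [Nat.sub_add_cancel ha, Nat.sub_add_cancel (ha.trans hab)] using this

lemma le_conj_iff {p : ℕ → ℕ} (hp : IsPartition p) {r c : ℕ} (hr : 1 ≤ r) (hc : 1 ≤ c) :
    c ≤ conj p r ↔ r ≤ p c := by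
  obtain ⟨N, hN⟩ := hp.2.2
  have hfin : {c : ℕ | 1 ≤ c ∧ r ≤ p c}.Finite := by
    apply Set.Finite.subset (Set.finite_Iio N)
    rintro b ⟨hb1, hb2⟩
    simp only [Set.mem_Iio]
    by_contra h
    have h0 := hN b (le_of_not_gt h)
    omega
  constructor
  · intro h
    by_contra hcon
    push_neg at hcon
    have hsub : {c : ℕ | 1 ≤ c ∧ r ≤ p c} ⊆ ↑(Finset.Ico 1 c) := by
      rintro b ⟨hb1, hb2⟩
      simp only [Finset.coe_Ico, Set.mem_Ico]
      refine ⟨hb1, ?_⟩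
      by_contra hbc
      push_neg at hbc
      have := partition_antitone hp hc hbc
      omega
    have := Set.ncard_le_ncard hsub (Finset.finite_toSet _)
    rw [Set.ncard_coe_finset, Nat.card_Ico] at this
    unfold conj at h
    omega
  · intro h
    have hsub : ↑(Finset.Icc 1 c) ⊆ {c : ℕ | 1 ≤ c ∧ r ≤ p c} := by
      rintro b hb
      simp only [Finset.coe_Icc, Set.mem_Icc] at hb
      exact ⟨hb.1, h.trans (partition_antitone hp hb.1 hb.2)⟩
    have := Set.ncard_le_ncard hsub hfin
    rw [Set.ncard_coe_finset, Nat.card_Icc] at this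
    unfold conj
    omega

lemma cells_conj {p : ℕ → ℕ} (hp : IsPartition p) :
    cells (conj p) = Prod.swap ⁻¹' cells p := by
  ext x
  simp only [cells, Set.mem_setOf_eq, Set.mem_preimage, Prod.fst_swap, Prod.snd_swap]
  constructor
  · rintro ⟨h1, h2, h3⟩
    refine ⟨h2, h1, ?_⟩
    have hr : 1 ≤ x.1.toNat := by omega
    have hc : 1 ≤ x.2.toNat := by omega
    have := (le_conj_iff hp hr hc).mp (by omega : x.2.toNat ≤ conj p x.1.toNat)
    omega
  · rintro ⟨h1, h2, h3⟩
    refine ⟨h2, h1, ?_⟩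
    have hr : 1 ≤ x.1.toNat := by omega
    have hc : 1 ≤ x.2.toNat := by omega
    have := (le_conj_iff hp hr hc).mpr (by omega : x.1.toNat ≤ p x.2.toNat)
    omega

lemma ladder_swap (e y r c : ℤ) : Prod.swap ⁻¹' Ladder e y r c = Ladder e (e - y) c r := by
  ext x
  simp only [Ladder, Set.mem_preimage, Set.mem_setOf_eq, Prod.swap, Prod.ext_iff]
  constructor
  · rintro ⟨k, hk1, hk2⟩
    exact ⟨-k, by constructor <;> linarith⟩
  · rintro ⟨k, hk1, hk2⟩
    exact ⟨-k, by constructor <;> linarith⟩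

theorem ladderEquiv_iff_conj (e y : ℤ) (he : 2 ≤ e) (hy1 : 1 ≤ y) (hy2 : y ≤ e - 1)
    (p q : ℕ → ℕ) (hp : IsPartition p) (hq : IsPartition q) :
    LadderEquiv e y p q ↔ LadderEquiv e (e - y) (conj p) (conj q) := by
  have key : ∀ p : ℕ → ℕ, IsPartition p → ∀ r c : ℤ,
      (Ladder e (e - y) r c ∩ cells (conj p)).ncard = (Ladder e y c r ∩ cells p).ncard := by
    intro p hp r c
    rw [cells_conj hp, ← ladder_swap, ← Set.preimage_inter,
      ← Set.image_swap_eq_preimage_swap, Set.ncard_image_of_injective _ Prod.swap_injective]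
  constructor
  · intro h r c
    rw [key p hp, key q hq]
    exact h c r
  · intro h r c
    have h1 := key p hp c r
    have h2 := key q hq c r
    rw [← h1, ← h2]
    exact h c r
end

section
/- Every arm sequence A equals A^{y+} or A^{y−} for some real y ∈ [1, e−1], where A^{y+}_t = ⌊yt⌋ and A^{y−}_t = ⌈yt−1⌉. -/
def IsArmSeq (e : ℕ) (A : ℕ → ℤ) : Prop :=
  (∀ t : ℕ, 1 ≤ t → (t : ℤ) - 1 ≤ A t ∧ A t ≤ ((e : ℤ) - 1) * t) ∧
  (∀ t u : ℕ, 1 ≤ t → 1 ≤ u → A (t + u) = A t + A u ∨ A (t + u) = A t + A u + 1)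

lemma arm_mul_bounds (A : ℕ → ℤ)
    (hstep : ∀ t u : ℕ, 1 ≤ t → 1 ≤ u → A (t + u) = A t + A u ∨ A (t + u) = A t + A u + 1) :
    ∀ n t : ℕ, 1 ≤ n → 1 ≤ t →
      (n : ℤ) * A t ≤ A (n * t) ∧ A (n * t) ≤ (n : ℤ) * A t + ((n : ℤ) - 1) := by
  intro n
  induction n with
  | zero => intro t h; omega
  | succ m ih =>
    intro t _ ht
    rcases Nat.eq_or_lt_of_le (Nat.one_le_iff_ne_zero.mpr (by omega) : 1 ≤ m + 1) with h1 | h1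
    · simp [← h1]
    have hm : 1 ≤ m := by omega
    obtain ⟨ih1, ih2⟩ := ih t hm ht
    have : (m + 1) * t = m * t + t := by ring
    rw [this]
    have hmt : 1 ≤ m * t := Nat.one_le_iff_ne_zero.mpr (by positivity)
    rcases hstep (m * t) t hmt ht with h | h <;> rw [h] <;> push_cast <;> constructor <;> nlinarith

/-- Every arm sequence equals `A^{y+} : t ↦ ⌊yt⌋` or `A^{y-} : t ↦ ⌈yt - 1⌉`
for some real `y ∈ [1, e-1]`. -/
theorem arm_seq_classification (e : ℕ) (he : 2 ≤ e) (A : ℕ → ℤ) (hA : IsArmSeq e A) :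
    ∃ y : ℝ, 1 ≤ y ∧ y ≤ (e : ℝ) - 1 ∧
      ((∀ t : ℕ, 1 ≤ t → A t = ⌊y * t⌋) ∨ (∀ t : ℕ, 1 ≤ t → A t = ⌈y * t - 1⌉)) := by
  obtain ⟨hbound, hstep⟩ := hA
  -- cross inequality : t * A u ≤ u * A t + u - 1
  have hcross : ∀ t u : ℕ, 1 ≤ t → 1 ≤ u →
      (t : ℤ) * A u ≤ (u : ℤ) * A t + ((u : ℤ) - 1) := by
    intro t u ht hu
    have h1 := (arm_mul_bounds A hstep t u ht hu).1
    have h2 := (arm_mul_bounds A hstep u t hu ht).2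
    rw [show t * u = u * t from Nat.mul_comm t u] at h1
    linarith
  set S : Set ℝ := (fun t : ℕ => (A t : ℝ) / t) '' {t : ℕ | 1 ≤ t} with hS
  have hSne : S.Nonempty := ⟨_, ⟨1, by simp, rfl⟩⟩
  have hSbdd : BddAbove S := by
    refine ⟨(e : ℝ) - 1, ?_⟩
    rintro x ⟨t, ht, rfl⟩
    have htpos : (0 : ℝ) < t := by exact_mod_cast (ht : 1 ≤ t)
    rw [div_le_iff₀ htpos]
    have := (hbound t ht).2
    have : (A t : ℝ) ≤ ((e : ℝ) - 1) * t := by exact_mod_cast this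
    linarith
  set y : ℝ := sSup S with hy
  -- A t ≤ y * t
  have hAle : ∀ t : ℕ, 1 ≤ t → (A t : ℝ) ≤ y * t := by
    intro t ht
    have htpos : (0 : ℝ) < t := by exact_mod_cast (ht : 1 ≤ t)
    have : (A t : ℝ) / t ≤ y := le_csSup hSbdd ⟨t, ht, rfl⟩
    calc (A t : ℝ) = ((A t : ℝ) / t) * t := by field_simp
    _ ≤ y * t := by nlinarith
  -- y * t ≤ A t + 1
  have hyle : ∀ t : ℕ, 1 ≤ t → y * t ≤ (A t : ℝ) + 1 := by
    intro t ht
    have htpos : (0 : ℝ) < t := by exact_mod_cast (ht : 1 ≤ t)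
    have hub : y ≤ ((A t : ℝ) + 1) / t := by
      apply csSup_le hSne
      rintro x ⟨u, hu, rfl⟩
      have hupos : (0 : ℝ) < u := by exact_mod_cast (hu : 1 ≤ u)
      rw [div_le_div_iff₀ hupos htpos]
      have := hcross t u ht hu
      have : (t : ℝ) * A u ≤ (u : ℝ) * A t + ((u : ℝ) - 1) := by exact_mod_cast this
      nlinarith
    calc y * t ≤ (((A t : ℝ) + 1) / t) * t := by nlinarith
    _ = (A t : ℝ) + 1 := by field_simp
  -- y ≥ 1
  have hy1 : 1 ≤ y := by
    by_contra h
    push_neg at h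
    obtain ⟨n, hn⟩ := exists_nat_gt (1 / (1 - y))
    have hn1 : 1 ≤ n + 1 := by omega
    have h1 : (A (n+1) : ℝ) / ((n:ℕ)+1 : ℕ) ≤ y := le_csSup hSbdd ⟨n+1, hn1, rfl⟩
    have h2 := (hbound (n+1) hn1).1
    have h2' : ((n : ℝ) + 1) - 1 ≤ (A (n+1) : ℝ) := by exact_mod_cast h2
    have hpos : (0 : ℝ) < (n : ℝ) + 1 := by positivity
    have h3 : ((n : ℝ)) ≤ y * ((n:ℝ)+1) := by
      push_cast at h1
      have := (div_le_iff₀ hpos).mp h1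
      linarith
    have h4 : (0:ℝ) < 1 - y := by linarith
    have h5 : 1 / (1 - y) < (n : ℝ) := hn
    rw [div_lt_iff₀ h4] at h5
    nlinarith
  have hyE : y ≤ (e : ℝ) - 1 := by
    apply csSup_le hSne
    rintro x ⟨t, ht, rfl⟩
    have htpos : (0 : ℝ) < t := by exact_mod_cast (ht : 1 ≤ t)
    rw [div_le_iff₀ htpos]
    have := (hbound t ht).2
    have : (A t : ℝ) ≤ ((e : ℝ) - 1) * t := by exact_mod_cast this
    linarith
  refine ⟨y, hy1, hyE, ?_⟩
  -- key contradiction lemma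
  have hkey : ∀ t s : ℕ, 1 ≤ t → 1 ≤ s → (A t : ℝ) = y * t → (A s : ℝ) = y * s - 1 → False := by
    intro t s ht hs hteq hseq
    -- A (s * t) = y * (s*t) and = y*(s*t) - 1
    have h1 : (A (s * t) : ℝ) = y * (s * t : ℕ) := by
      have hge := (arm_mul_bounds A hstep s t hs ht).1
      have hge' : (s : ℝ) * A t ≤ (A (s * t) : ℝ) := by exact_mod_cast hge
      have hle := hAle (s * t) (Nat.one_le_iff_ne_zero.mpr (by positivity))
      push_cast at hge' hle ⊢
      nlinarith
    have h2 : (A (t * s) : ℝ) = y * (t * s : ℕ) - 1 := by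
      have hle := (arm_mul_bounds A hstep t s ht hs).2
      have hle' : (A (t * s) : ℝ) ≤ (t : ℝ) * A s + ((t : ℝ) - 1) := by exact_mod_cast hle
      have hge := hyle (t * s) (Nat.one_le_iff_ne_zero.mpr (by positivity))
      push_cast at hle' hge ⊢
      nlinarith
    rw [show t * s = s * t from Nat.mul_comm t s] at h2
    rw [h1] at h2
    linarith
  by_cases hfloor : ∀ t : ℕ, 1 ≤ t → A t = ⌊y * t⌋
  · exact Or.inl hfloor
  · push_neg at hfloor
    obtain ⟨s, hs, hsne⟩ := hfloor
    -- then A s = y*s - 1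
    have hseq : (A s : ℝ) = y * s - 1 := by
      have h1 := hAle s hs
      have h2 := hyle s hs
      have h3 : A s ≤ ⌊y * s⌋ := Int.le_floor.mpr h1
      have h4 : A s < ⌊y * s⌋ := lt_of_le_of_ne h3 hsne
      have h5 : (A s : ℝ) + 1 ≤ ⌊y * s⌋ := by exact_mod_cast h4
      have h6 : (⌊y * s⌋ : ℝ) ≤ y * s := Int.floor_le _
      linarith
    refine Or.inr ?_
    intro t ht
    have h1 := hAle t ht
    have h2 := hyle t ht
    have hlow : ⌈y * t - 1⌉ ≤ A t := Int.ceil_le.mpr (by push_cast; linarith)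
    have hup : A t ≤ ⌈y * t - 1⌉ := by
      have hne : (A t : ℝ) ≠ y * t := fun h => hkey t s ht hs h hseq
      have hlt : (A t : ℝ) < y * t := lt_of_le_of_ne h1 hne
      have : A t < ⌈y * t⌉ := Int.lt_ceil.mpr hlt
      have := Int.ceil_sub_one (y * t)
      omega
    omega
end

section
/- Let A be an arm sequence, n ∈ ℕ, and y = max{ A_t / t : 1 ≤ t ≤ n }. Then A_t = ⌊yt⌋ for t = 1, …, n. -/
lemma arm_mul {e : ℕ} {A : ℕ → ℤ} (hA : IsArmSeq e A) :
    ∀ k m : ℕ, 1 ≤ k → 1 ≤ m →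
      (k : ℤ) * A m ≤ A (k * m) ∧ A (k * m) ≤ (k : ℤ) * A m + ((k : ℤ) - 1) := by
  intro k
  induction k with
  | zero => omega
  | succ k ih =>
    intro m hk hm
    rcases Nat.lt_or_ge k 1 with h | h
    · interval_cases k
      simp
    · obtain ⟨h1, h2⟩ := ih m h hm
      have hstep := hA.2 (k * m) m (Nat.one_le_iff_ne_zero.mpr (by positivity)) hm
      have heq : (k + 1) * m = k * m + m := by ring
      rw [heq]
      rcases hstep with h3 | h3 <;> rw [h3] <;> push_cast <;> constructor <;> nlinarith

/-- If `A` is an arm sequence and `y = max { A t / t : 1 ≤ t ≤ n }`,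
then `A t = ⌊yt⌋` for `t = 1, …, n`. -/
theorem arm_seq_max_slope (e : ℕ) (he : 2 ≤ e) (A : ℕ → ℤ) (hA : IsArmSeq e A)
    (n : ℕ) (hn : 1 ≤ n) (y : ℝ)
    (hy : IsGreatest {x : ℝ | ∃ t : ℕ, 1 ≤ t ∧ t ≤ n ∧ x = (A t : ℝ) / t} y) :
    ∀ t : ℕ, 1 ≤ t → t ≤ n → A t = ⌊y * t⌋ := by
  obtain ⟨⟨s, hs1, hsn, hys⟩, hub⟩ := hy
  intro t ht htn
  have hs0 : (0 : ℝ) < (s : ℝ) := by exact_mod_cast hs1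
  have ht0 : (0 : ℝ) < (t : ℝ) := by exact_mod_cast ht
  symm
  rw [Int.floor_eq_iff]
  constructor
  · have h := hub ⟨t, ht, htn, rfl⟩
    have := div_le_iff₀ ht0 |>.mp h
    linarith
  · -- y * t < A t + 1
    have key : (t : ℤ) * A s ≤ (s : ℤ) * A t + ((s : ℤ) - 1) := by
      have h1 := (arm_mul hA t s ht hs1).1
      have h2 := (arm_mul hA s t hs1 ht).2
      rw [mul_comm t s] at h1
      linarith
    rw [hys, div_mul_eq_mul_div, div_lt_iff₀ hs0]
    have keyR : ((t : ℝ)) * (A s : ℝ) ≤ (s : ℝ) * (A t : ℝ) + ((s : ℝ) - 1) := by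
      exact_mod_cast key
    push_cast
    nlinarith
end

section
/- A partition λ is e-restricted if and only if λ is A-regular for the arm sequence A = (e−1, 2(e−1), 3(e−1), …): that is, λ has no hook of length et with arm length (e−1)t for any t ≥ 1 if and only if λ_r − λ_{r+1} < e for all r. -/
noncomputable def HasHook (p : ℕ → ℕ) (len arm : ℕ) : Prop :=
  ∃ r c : ℕ, 1 ≤ r ∧ 1 ≤ c ∧ c ≤ p r ∧
    (p r - c) + (conj p c - r) + 1 = len ∧ p r - c = arm

lemma part_anti (p : ℕ → ℕ) (hp : IsPartition p) {a b : ℕ} (ha : 1 ≤ a) (hab : a ≤ b) :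
    p b ≤ p a := by
  obtain ⟨-, hmono, -⟩ := hp
  induction b with
  | zero => omega
  | succ n ih =>
    rcases Nat.lt_or_ge a (n + 1) with h | h
    · exact le_trans (hmono n (by omega)) (ih (by omega))
    · have : a = n + 1 := by omega
      simp [this]

lemma conj_char (p : ℕ → ℕ) (hp : IsPartition p) {c : ℕ} (hc : 1 ≤ c) :
    ∀ j, 1 ≤ j → (c ≤ p j ↔ j ≤ conj p c) := by
  obtain ⟨N, hN⟩ := hp.2.2
  set S : Finset ℕ := (Finset.Icc 1 N).filter (fun j => c ≤ p j) with hS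
  have hmem : ∀ j, j ∈ S ↔ (1 ≤ j ∧ c ≤ p j) := by
    intro j
    simp only [hS, Finset.mem_filter, Finset.mem_Icc]
    constructor
    · rintro ⟨⟨h1, _⟩, h2⟩; exact ⟨h1, h2⟩
    · rintro ⟨h1, h2⟩
      refine ⟨⟨h1, ?_⟩, h2⟩
      by_contra h
      have := hN j (by omega)
      omega
  have hset : {c' : ℕ | 1 ≤ c' ∧ c ≤ p c'} = ↑S := by
    ext j; simp [hmem j]
  have hconj : conj p c = S.card := by
    simp only [conj]
    rw [hset, Set.ncard_coe_finset]
  by_cases hne : S.Nonempty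
  · set m := S.max' hne with hm
    have hmS : m ∈ S := S.max'_mem hne
    have hSm : S = Finset.Icc 1 m := by
      ext j
      rw [hmem, Finset.mem_Icc]
      constructor
      · rintro ⟨h1, h2⟩
        exact ⟨h1, S.le_max' j ((hmem j).2 ⟨h1, h2⟩)⟩
      · rintro ⟨h1, h2⟩
        exact ⟨h1, le_trans ((hmem m).1 hmS).2 (part_anti p hp h1 h2)⟩
    have hcard : S.card = m := by rw [hSm, Nat.card_Icc]; omega
    intro j hj
    have : (j ∈ S) ↔ (1 ≤ j ∧ j ≤ m) := by rw [hSm, Finset.mem_Icc]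
    rw [hmem] at this
    rw [hconj, hcard]
    constructor
    · intro h; exact (this.1 ⟨hj, h⟩).2
    · intro h; exact (this.2 ⟨hj, h⟩).2
  · have hcard : S.card = 0 := by
      rw [Finset.card_eq_zero]
      exact Finset.not_nonempty_iff_eq_empty.1 hne
    intro j hj
    rw [hconj, hcard]
    constructor
    · intro h
      exact absurd ((hmem j).2 ⟨hj, h⟩) (fun hh => hne ⟨j, hh⟩)
    · omega

lemma diff_le (p : ℕ → ℕ) (e : ℕ) (hp : IsPartition p)
    (h : ∀ r, 1 ≤ r → p r - p (r + 1) < e) (he : 1 ≤ e)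
    (r : ℕ) (hr : 1 ≤ r) : ∀ k, p r - p (r + k) ≤ k * (e - 1) := by
  intro k
  induction k with
  | zero => simp
  | succ n ih =>
    have h1 := h (r + n) (by omega)
    have h2 := hp.2.1 (r + n) (by omega)
    have h3 : (n + 1) * (e - 1) = n * (e - 1) + (e - 1) := by ring
    rw [h3, ← Nat.add_assoc]
    set A := n * (e - 1) with hA
    omega

/-- `λ` is `e`-restricted iff it has no hook of length `et` with arm length
`(e-1)t` for any `t ≥ 1`. -/
theorem restricted_iff_no_steep_hooks (e : ℕ) (he : 2 ≤ e)
    (p : ℕ → ℕ) (hp : IsPartition p) :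
    (∀ r, 1 ≤ r → p r - p (r + 1) < e) ↔
      ∀ t : ℕ, 1 ≤ t → ¬ HasHook p (e * t) ((e - 1) * t) := by
  constructor
  · intro h t ht ⟨r, c, hr, hc, hcp, hlen, harm⟩
    have hchar := conj_char p hp hc
    have hrm : r ≤ conj p c := (hchar r hr).1 hcp
    set m := conj p c with hm
    have hBA : e * t = (e - 1) * t + t := by
      have h1 : e - 1 + 1 = e := by omega
      calc e * t = (e - 1 + 1) * t := by rw [h1]
        _ = (e - 1) * t + t := by ring
    set A := (e - 1) * t with hA
    -- m = r + t - 1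
    have hmeq : m = r + t - 1 := by omega
    have hlt : p (r + t) < c := by
      by_contra hcon
      have := (hchar (r + t) (by omega)).1 (by omega)
      omega
    have hdiff : A + 1 ≤ p r - p (r + t) := by omega
    have hle := diff_le p e hp h (by omega) r hr t
    have : t * (e - 1) = A := by rw [hA]; ring
    omega
  · intro h r hr
    by_contra hcon
    push_neg at hcon
    set c := p r - (e - 1) with hc
    have hpr : e ≤ p r := by omega
    have hc1 : 1 ≤ c := by omega
    have hcle : c ≤ p r := by omega
    have hlt : p (r + 1) < c := by omega
    have hchar := conj_char p hp hc1
    have h1 : r ≤ conj p c := (hchar r hr).1 hcle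
    have h2 : conj p c < r + 1 := by
      by_contra hcon2
      have := (hchar (r + 1) (by omega)).2 (by omega)
      omega
    have hconj : conj p c = r := by omega
    exact h 1 le_rfl ⟨r, c, hr, hc1, hcle, by rw [hconj]; omega, by omega⟩
end

section
/- Suppose λ is a partition with a removable i-node (r,c) and an addable i-node (s,d) (both of residue i mod e) such that dep(s,d) − e < dep(r,c) < dep(s,d), where dep(x,w) = yx + (e−y)w for a fixed rational y ∈ (1, e−1). Then λ has a hook of length et and arm length ⌊yt⌋ for some integer t ≥ 1 with yt ∉ ℤ. -/
/-- `(r,c)` is a removable node of `p`. -/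
def Removable (p : ℕ → ℕ) (r c : ℕ) : Prop :=
  1 ≤ r ∧ c = p r ∧ p (r + 1) < p r

/-- `(s,d)` is an addable node of `p`. -/
def Addable (p : ℕ → ℕ) (s d : ℕ) : Prop :=
  1 ≤ s ∧ d = p s + 1 ∧ (s = 1 ∨ p s < p (s - 1))

lemma part_mono (p : ℕ → ℕ) (hp : IsPartition p) {i j : ℕ} (hi : 1 ≤ i) (hij : i ≤ j) :
    p j ≤ p i := by
  induction j, hij using Nat.le_induction with
  | base => exact le_refl _
  | succ n hn ih => exact le_trans (hp.2.1 n (le_trans hi hn)) ih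

lemma conj_eq (p : ℕ → ℕ) (v m : ℕ) (h1 : ∀ j, 1 ≤ j → j ≤ m → v ≤ p j)
    (h2 : ∀ j, m < j → p j < v) : conj p v = m := by
  have hset : {c : ℕ | 1 ≤ c ∧ v ≤ p c} = Set.Icc 1 m := by
    ext j
    simp only [Set.mem_setOf_eq, Set.mem_Icc]
    constructor
    · rintro ⟨hj, hv⟩
      refine ⟨hj, ?_⟩
      by_contra h
      exact absurd hv (not_le.2 (h2 j (by omega)))
    · rintro ⟨hj, hjm⟩
      exact ⟨hj, h1 j hj hjm⟩
  rw [conj, hset, ← Finset.coe_Icc, Set.ncard_coe_finset, Nat.card_Icc]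
  omega

/-- If `λ` has a removable `i`-node `(r,c)` and an addable `i`-node `(s,d)` with
`dep(s,d) - e < dep(r,c) < dep(s,d)` (where `dep(x,w) = yx + (e-y)w`), then `λ`
has a hook of length `et` and arm length `⌊yt⌋` for some `t ≥ 1` with `yt ∉ ℤ`. -/
theorem noaddrem (e : ℕ) (he : 3 ≤ e) (y : ℚ) (hy1 : 1 < y) (hy2 : y < (e : ℚ) - 1)
    (p : ℕ → ℕ) (hp : IsPartition p) (r c s d : ℕ)
    (hrem : Removable p r c) (hadd : Addable p s d)
    (hres : ((c : ℤ) - r) % (e : ℤ) = ((d : ℤ) - s) % (e : ℤ))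
    (hdep1 : y * s + ((e : ℚ) - y) * d - e < y * r + ((e : ℚ) - y) * c)
    (hdep2 : y * r + ((e : ℚ) - y) * c < y * s + ((e : ℚ) - y) * d) :
    ∃ t : ℕ, 1 ≤ t ∧ (y * t).den ≠ 1 ∧ HasHook p (e * t) (⌊y * (t : ℚ)⌋.toNat) := by
  obtain ⟨hr1, hc, hrc⟩ := hrem
  obtain ⟨hs1, hd, hsd⟩ := hadd
  have he0 : (0:ℚ) < e := by positivity
  have hey : (1:ℚ) < (e:ℚ) - y := by linarith
  have hdvd : (e:ℤ) ∣ (((d:ℤ) - s) - ((c:ℤ) - r)) := Int.ModEq.dvd hres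
  obtain ⟨k, hk⟩ := hdvd
  have hdq : ((d:ℚ) - s) - ((c:ℚ) - r) = (e:ℚ) * k := by exact_mod_cast hk
  have hiden : y * s + ((e:ℚ) - y) * d - (y * r + ((e:ℚ) - y) * c)
      = (e:ℚ) * (((s:ℚ) - r) + k * ((e:ℚ) - y)) := by
    have hdd : (d:ℚ) = (c:ℚ) - r + e * k + s := by linarith
    rw [hdd]; ring
  have h0 : 0 < ((s:ℚ) - r) + k * ((e:ℚ) - y) := by
    refine lt_of_mul_lt_mul_left (a := (e:ℚ)) ?_ he0.le
    rw [mul_zero]; linarith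
  have h1 : ((s:ℚ) - r) + k * ((e:ℚ) - y) < 1 := by
    refine lt_of_mul_lt_mul_left (a := (e:ℚ)) ?_ he0.le
    rw [mul_one]; linarith
  rcases lt_trichotomy k 0 with hkneg | hk0 | hkpos
  · -- k < 0 : hook at (r, d)
    set t : ℕ := (-k).toNat with ht
    have hkt : (k:ℚ) = -(t:ℚ) := by
      have h : k = -(t:ℤ) := by omega
      rw [h]; push_cast; ring
    rw [hkt] at h0 h1
    have ht1 : 1 ≤ t := by omega
    have ht1q : (1:ℚ) ≤ (t:ℚ) := by exact_mod_cast ht1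
    have hyt : y * 1 ≤ y * t :=
      mul_le_mul_of_nonneg_left ht1q (le_of_lt (lt_trans zero_lt_one hy1))
    have htey : ((e:ℚ) - y) * 1 ≤ ((e:ℚ) - y) * t :=
      mul_le_mul_of_nonneg_left ht1q (by linarith)
    have hyt1 : (1:ℚ) < y * t := by linarith
    have hrs : r < s := by
      have hq : (r:ℚ) < s := by linarith
      exact_mod_cast hq
    -- M = e*t - (s - r) : ℤ ; this will be the arm / floor
    set M : ℤ := (e:ℤ) * t - s + r with hM
    have hMq : (M:ℚ) = (e:ℚ) * t - s + r := by rw [hM]; push_cast; ring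
    have hlow : (M:ℚ) < y * t := by rw [hMq]; linarith
    have hhigh : y * t < (M:ℚ) + 1 := by rw [hMq]; linarith
    have hfl : ⌊y * (t:ℚ)⌋ = M := by
      rw [Int.floor_eq_iff]; exact ⟨hlow.le, hhigh⟩
    have hM1 : 1 ≤ M := by
      have h2 : (1:ℤ) ≤ ⌊y * (t:ℚ)⌋ := Int.le_floor.2 (by exact_mod_cast hyt1.le)
      omega
    have hden : (y * (t:ℚ)).den ≠ 1 := by
      intro hden1
      have hz : ((y * (t:ℚ)).num : ℚ) = y * t := Rat.den_eq_one_iff _ |>.mp hden1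
      have l1 : (M:ℚ) < ((y * (t:ℚ)).num : ℚ) := by rw [hz]; exact hlow
      have l2 : (((y * (t:ℚ)).num : ℚ)) < (M:ℚ) + 1 := by rw [hz]; exact hhigh
      have i1 : M < (y * (t:ℚ)).num := by exact_mod_cast l1
      have i2 : (y * (t:ℚ)).num < M + 1 := by exact_mod_cast l2
      omega
    -- combinatorics
    have hs2 : 2 ≤ s := by omega
    have hps1 : p s < p (s - 1) := by rcases hsd with h | h; omega; exact h
    have hket : (e:ℤ) * k = -((e:ℤ) * t) := by
      have h : k = -(t:ℤ) := by omega
      rw [h]; ring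
    -- d - c = -(M) in ℤ, i.e. c = d + M
    have hcd : (c:ℤ) = (d:ℤ) + M := by omega
    have hdc : d + M.toNat = c := by omega
    have hconj : conj p d = s - 1 := by
      apply conj_eq
      · intro j hj hjm
        have h3 : p (s-1) ≤ p j := part_mono p hp hj hjm
        omega
      · intro j hjm
        have h3 : p j ≤ p s := part_mono p hp hs1 (by omega)
        omega
    refine ⟨t, ht1, hden, r, d, hr1, by omega, by omega, ?_, ?_⟩
    · rw [hconj, ← hc]
      omega
    · rw [← hc, hfl]; omega
  · -- k = 0 : impossible
    exfalso
    rw [hk0] at h0 h1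
    push_cast at h0 h1
    have hq0 : (0:ℚ) < ((s:ℚ) - r) := by linarith
    have hq1 : ((s:ℚ) - r) < 1 := by linarith
    have i0 : (r:ℤ) < s := by exact_mod_cast (by linarith : (r:ℚ) < s)
    have i1 : (s:ℤ) < r + 1 := by exact_mod_cast (by linarith : (s:ℚ) < r + 1)
    omega
  · -- k > 0 : hook at (s, c)
    set t : ℕ := k.toNat with ht
    have hkt : (k:ℚ) = (t:ℚ) := by
      have h : k = (t:ℤ) := by omega
      rw [h]; push_cast; ring
    rw [hkt] at h0 h1
    have ht1 : 1 ≤ t := by omega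
    have ht1q : (1:ℚ) ≤ (t:ℚ) := by exact_mod_cast ht1
    have hyt : y * 1 ≤ y * t :=
      mul_le_mul_of_nonneg_left ht1q (le_of_lt (lt_trans zero_lt_one hy1))
    have htey : ((e:ℚ) - y) * 1 ≤ ((e:ℚ) - y) * t :=
      mul_le_mul_of_nonneg_left ht1q (by linarith)
    have hyt1 : (1:ℚ) < y * t := by linarith
    have hsr : s < r := by
      have hq : (s:ℚ) < r := by linarith
      exact_mod_cast hq
    set M : ℤ := (e:ℤ) * t + s - r - 1 with hM
    have hMq : (M:ℚ) = (e:ℚ) * t + s - r - 1 := by rw [hM]; push_cast; ring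
    have hlow : (M:ℚ) < y * t := by rw [hMq]; linarith
    have hhigh : y * t < (M:ℚ) + 1 := by rw [hMq]; linarith
    have hfl : ⌊y * (t:ℚ)⌋ = M := by
      rw [Int.floor_eq_iff]; exact ⟨hlow.le, hhigh⟩
    have hM1 : 1 ≤ M := by
      have h2 : (1:ℤ) ≤ ⌊y * (t:ℚ)⌋ := Int.le_floor.2 (by exact_mod_cast hyt1.le)
      omega
    have hden : (y * (t:ℚ)).den ≠ 1 := by
      intro hden1
      have hz : ((y * (t:ℚ)).num : ℚ) = y * t := Rat.den_eq_one_iff _ |>.mp hden1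
      have l1 : (M:ℚ) < ((y * (t:ℚ)).num : ℚ) := by rw [hz]; exact hlow
      have l2 : (((y * (t:ℚ)).num : ℚ)) < (M:ℚ) + 1 := by rw [hz]; exact hhigh
      have i1 : M < (y * (t:ℚ)).num := by exact_mod_cast l1
      have i2 : (y * (t:ℚ)).num < M + 1 := by exact_mod_cast l2
      omega
    have hket : (e:ℤ) * k = (e:ℤ) * t := by
      have h : k = (t:ℤ) := by omega
      rw [h]
    -- d = c + M + 1 in ℤ
    have hcd : (d:ℤ) = (c:ℤ) + M + 1 := by omega
    have hc1 : 1 ≤ c := by omega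
    have hcs : c ≤ p s := by
      have h3 : p r ≤ p s := part_mono p hp hs1 hsr.le
      omega
    have hconj : conj p c = r := by
      apply conj_eq
      · intro j hj hjm
        have h3 : p r ≤ p j := part_mono p hp hj hjm
        omega
      · intro j hjm
        have h3 : p j ≤ p (r+1) := part_mono p hp (by omega) (by omega)
        omega
    refine ⟨t, ht1, hden, s, c, hs1, hc1, hcs, ?_, ?_⟩
    · rw [hconj]
      omega
    · rw [hfl]
      omega
end
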